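/- For polynomials f₁(z) ∈ ℂ[z] and f₂(z*) ∈ ℂ[z*] inside Pol(ℂ)_q, one has □(f₂(z*)·f₁(z)) = (∂^{(r)}f₂/∂z*) · q^{-2}(1 − (1+q^{-2})z*z + q^{-2}z*²z²) · (∂^{(l)}f₁/∂z). -/

import Mathlib

inductive PolRel (q : ℝ) : FreeAlgebra ℂ (Fin 2) → FreeAlgebra ℂ (Fin 2) → Prop
  | rel : PolRel q (FreeAlgebra.ι ℂ 1 * FreeAlgebra.ι ℂ 0)
      ((q ^ 2 : ℂ) • (FreeAlgebra.ι ℂ 0 * FreeAlgebra.ι ℂ 1) + ((1 : ℂ) - (q ^ 2 : ℂ)) • 1)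

abbrev PolC (q : ℝ) : Type := RingQuot (PolRel q)

noncomputable def Pz (q : ℝ) : PolC q := RingQuot.mkAlgHom ℂ (PolRel q) (FreeAlgebra.ι ℂ 0)

noncomputable def Pw (q : ℝ) : PolC q := RingQuot.mkAlgHom ℂ (PolRel q) (FreeAlgebra.ι ℂ 1)

/-!
Put `u = 1 - zz*`. The relation gives `u z = q² z u`, so `σ(σ g) u² = u² g` for `g ∈ ℂ[z]`,
and `q² u²` is the middle factor of the right-hand side. The components of `d` are
`φ`-twisted derivations; `∂/∂z` kills `ℂ[z*]`, `∂/∂z*` kills `ℂ[z]`, and `φ`, `σ` preserve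
both subalgebras. Hence `∂⁽ʳ⁾(f₂ f₁)/∂z = f₂ σ(∂⁽ˡ⁾f₁/∂z)` (as `σ ∘ φ = id` on `ℂ[z*]`), and
differentiating once more in `z*` leaves `∂⁽ˡ⁾f₂/∂z* · σ(∂⁽ˡ⁾f₁/∂z)`.
-/

section TwistedDerivation

variable {R A : Type*} [CommSemiring R] [Ring A] [Algebra R A]

def IsTwistedDerivation (φ : A →ₐ[R] A) (D : A →ₗ[R] A) : Prop :=
  ∀ f g, D (f * g) = D f * g + φ f * D g

namespace IsTwistedDerivation

variable {φ : A →ₐ[R] A} {D : A →ₗ[R] A}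

theorem map_one (hD : IsTwistedDerivation φ D) : D 1 = 0 := by
  simpa using hD 1 1

theorem map_algebraMap (hD : IsTwistedDerivation φ D) (a : R) : D (algebraMap R A a) = 0 := by
  rw [Algebra.algebraMap_eq_smul_one, map_smul, hD.map_one, smul_zero]

theorem eq_zero_of_mem_adjoin (hD : IsTwistedDerivation φ D) {s : Set A}
    (hs : ∀ x ∈ s, D x = 0) {g : A} (hg : g ∈ Algebra.adjoin R s) : D g = 0 := by
  induction hg using Algebra.adjoin_induction with
  | mem x hx => exact hs x hx
  | algebraMap a => exact hD.map_algebraMap a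
  | add x y _ _ hx hy => rw [map_add, hx, hy, add_zero]
  | mul x y _ _ hx hy => rw [hD, hx, hy, zero_mul, mul_zero, add_zero]

theorem map_mem_adjoin (hD : IsTwistedDerivation φ D) {s : Set A}
    (hφ : ∀ g ∈ Algebra.adjoin R s, φ g ∈ Algebra.adjoin R s)
    (hs : ∀ x ∈ s, D x ∈ Algebra.adjoin R s) {g : A} (hg : g ∈ Algebra.adjoin R s) :
    D g ∈ Algebra.adjoin R s := by
  induction hg using Algebra.adjoin_induction with
  | mem x hx => exact hs x hx
  | algebraMap a => rw [hD.map_algebraMap]; exact zero_mem _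
  | add x y _ _ hx hy => rw [map_add]; exact add_mem hx hy
  | mul x y hx' hy' hx hy => rw [hD]; exact add_mem (mul_mem hx hy') (mul_mem (hφ x hx') hy)

end IsTwistedDerivation

end TwistedDerivation

namespace AlgHom

variable {R A : Type*} [CommSemiring R] [Semiring A] [Algebra R A]

theorem map_mem_adjoin_singleton_of_eq_smul (ψ : A →ₐ[R] A) {x : A} {c : R}
    (hx : ψ x = c • x) {g : A} (hg : g ∈ Algebra.adjoin R {x}) : ψ g ∈ Algebra.adjoin R {x} := by
  have h : (Algebra.adjoin R {x}).map ψ ≤ Algebra.adjoin R {x} := by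
    rw [AlgHom.map_adjoin_singleton]
    exact Algebra.adjoin_singleton_le
      (hx ▸ Subalgebra.smul_mem _ (Algebra.self_mem_adjoin_singleton R x) c)
  exact h ⟨g, hg, rfl⟩

theorem map_mul_eq_mul_of_mem_adjoin (ψ : A →ₐ[R] A) {s : Set A} {u : A}
    (hs : ∀ x ∈ s, ψ x * u = u * x) {g : A} (hg : g ∈ Algebra.adjoin R s) :
    ψ g * u = u * g := by
  induction hg using Algebra.adjoin_induction with
  | mem x hx => exact hs x hx
  | algebraMap a => rw [AlgHom.commutes, Algebra.commutes]
  | add x y _ _ hx hy => rw [map_add, add_mul, hx, hy, mul_add]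
  | mul x y _ _ hx hy => rw [map_mul, mul_assoc, hy, ← mul_assoc, hx, mul_assoc]

end AlgHom

namespace PolC

variable (q : ℝ)

theorem Pw_mul_Pz : Pw q * Pz q = ((q : ℂ) ^ 2) • (Pz q * Pw q) + (1 - (q : ℂ) ^ 2) • 1 := by
  simpa [Pz, Pw] using RingQuot.mkAlgHom_rel ℂ (PolRel.rel (q := q))

theorem one_sub_Pw_mul_Pz : 1 - Pw q * Pz q = ((q : ℂ) ^ 2) • (1 - Pz q * Pw q) := by
  rw [Pw_mul_Pz]; module

theorem one_sub_Pz_mul_Pw_mul_Pz :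
    (1 - Pz q * Pw q) * Pz q = ((q : ℂ) ^ 2) • (Pz q * (1 - Pz q * Pw q)) := by
  rw [sub_mul, one_mul, mul_assoc, Pw_mul_Pz]
  simp only [mul_add, mul_sub, mul_smul_comm, mul_one, ← mul_assoc]
  module

theorem Pw_sq_mul_Pz_sq : Pw q ^ 2 * Pz q ^ 2 =
    ((q : ℂ) ^ 2) • (Pw q * Pz q) ^ 2 + (1 - (q : ℂ) ^ 2) • (Pw q * Pz q) := by
  calc Pw q ^ 2 * Pz q ^ 2 = Pw q * (Pw q * Pz q) * Pz q := by noncomm_ring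
    _ = Pw q * (((q : ℂ) ^ 2) • (Pz q * Pw q) + (1 - (q : ℂ) ^ 2) • 1) * Pz q := by
      rw [Pw_mul_Pz]
    _ = _ := by
      simp only [sq, mul_add, add_mul, mul_smul_comm, smul_mul_assoc, mul_one, mul_assoc]

/- Both sides equal `q⁻² (1 - z*z)²`, by `1 - z*z = q² (1 - zz*)` and
`z*²z² = q² (z*z)² + (1 - q²) z*z`. -/
theorem sq_smul_one_sub_Pz_mul_Pw_sq (hq : q ≠ 0) :
    ((q : ℂ) ^ 2) • (1 - Pz q * Pw q) ^ 2 = ((q : ℂ) ^ (-2 : ℤ)) •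
      (1 - ((1 : ℂ) + (q : ℂ) ^ (-2 : ℤ)) • (Pw q * Pz q) +
        ((q : ℂ) ^ (-2 : ℤ)) • (Pw q ^ 2 * Pz q ^ 2)) := by
  have hc : (q : ℂ) ≠ 0 := Complex.ofReal_ne_zero.mpr hq
  have h : 1 - Pz q * Pw q = ((q : ℂ) ^ 2)⁻¹ • (1 - Pw q * Pz q) := by
    rw [one_sub_Pw_mul_Pz, inv_smul_smul₀ (pow_ne_zero 2 hc)]
  rw [h, Pw_sq_mul_Pz_sq, smul_pow, zpow_neg, zpow_ofNat]
  simp only [sq, sub_mul, mul_sub, one_mul, mul_one]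
  match_scalars <;> field_simp
  ring

theorem map_mul_one_sub_Pz_mul_Pw {σ : PolC q →ₐ[ℂ] PolC q}
    (hσz : σ (Pz q) = ((q : ℂ) ^ (2 : ℤ)) • Pz q) {g : PolC q}
    (hg : g ∈ Algebra.adjoin ℂ {Pz q}) : σ g * (1 - Pz q * Pw q) = (1 - Pz q * Pw q) * g :=
  σ.map_mul_eq_mul_of_mem_adjoin (by simp [hσz, one_sub_Pz_mul_Pw_mul_Pz]) hg

theorem map_map_mul_one_sub_Pz_mul_Pw_sq {σ : PolC q →ₐ[ℂ] PolC q}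
    (hσz : σ (Pz q) = ((q : ℂ) ^ (2 : ℤ)) • Pz q) {g : PolC q}
    (hg : g ∈ Algebra.adjoin ℂ {Pz q}) :
    σ (σ g) * (1 - Pz q * Pw q) ^ 2 = (1 - Pz q * Pw q) ^ 2 * g := by
  rw [sq, ← mul_assoc,
    map_mul_one_sub_Pz_mul_Pw q hσz (σ.map_mem_adjoin_singleton_of_eq_smul hσz hg), mul_assoc,
    map_mul_one_sub_Pz_mul_Pw q hσz hg, ← mul_assoc]

end PolC

/-- `Pz q`, `Pw q` are `z`, `z*`; `d f = (∂⁽ˡ⁾f/∂z, ∂⁽ˡ⁾f/∂z*)`, left multiplication on `Ω¹`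
acts through `φ`, and right partials are `∂⁽ʳ⁾f/∂x = σ(∂⁽ˡ⁾f/∂x)`. -/
theorem box_on_wick_products_general (q : ℝ) (hq0 : 0 < q)
    (φ σ : PolC q →ₐ[ℂ] PolC q)
    (hφz : φ (Pz q) = ((q : ℂ) ^ (-2 : ℤ)) • Pz q)
    (hφw : φ (Pw q) = ((q : ℂ) ^ (2 : ℤ)) • Pw q)
    (hσz : σ (Pz q) = ((q : ℂ) ^ (2 : ℤ)) • Pz q)
    (hσw : σ (Pw q) = ((q : ℂ) ^ (-2 : ℤ)) • Pw q)
    (d : PolC q →ₗ[ℂ] PolC q × PolC q)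
    (hdz : d (Pz q) = (1, 0))
    (hdw : d (Pw q) = (0, 1))
    (hLeib : ∀ f g : PolC q,
      d (f * g) = ((d f).1 * g + φ f * (d g).1, (d f).2 * g + φ f * (d g).2)) :
    ∀ p r : Polynomial ℂ,
      let f₁ : PolC q := Polynomial.aeval (Pz q) p
      let f₂ : PolC q := Polynomial.aeval (Pw q) r
      ((q : ℂ) ^ 2) • (σ ((d (σ ((d (f₂ * f₁)).1))).2) * (1 - Pz q * Pw q) ^ 2) =
        σ ((d f₂).2) *
          (((q : ℂ) ^ (-2 : ℤ)) •
            (1 - ((1 : ℂ) + (q : ℂ) ^ (-2 : ℤ)) • (Pw q * Pz q) +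
              ((q : ℂ) ^ (-2 : ℤ)) • (Pw q ^ 2 * Pz q ^ 2))) *
          (d f₁).1 := by
  intro p r f₁ f₂
  have hf₁ : f₁ ∈ Algebra.adjoin ℂ {Pz q} := Polynomial.aeval_mem_adjoin_singleton ℂ _
  have hf₂ : f₂ ∈ Algebra.adjoin ℂ {Pw q} := Polynomial.aeval_mem_adjoin_singleton ℂ _
  have hd₁ : IsTwistedDerivation φ (LinearMap.fst ℂ _ _ ∘ₗ d) :=
    fun f g => congrArg Prod.fst (hLeib f g)
  have hd₂ : IsTwistedDerivation φ (LinearMap.snd ℂ _ _ ∘ₗ d) :=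
    fun f g => congrArg Prod.snd (hLeib f g)
  have hg₁ : (d f₁).1 ∈ Algebra.adjoin ℂ {Pz q} :=
    hd₁.map_mem_adjoin (fun _ => φ.map_mem_adjoin_singleton_of_eq_smul hφz) (by simp [hdz]) hf₁
  have hdf₂ : (d f₂).1 = 0 := hd₁.eq_zero_of_mem_adjoin (by simp [hdw]) hf₂
  have hdσg₁ : (d (σ (d f₁).1)).2 = 0 :=
    hd₂.eq_zero_of_mem_adjoin (by simp [hdz]) (σ.map_mem_adjoin_singleton_of_eq_smul hσz hg₁)
  have hσφ : σ (φ f₂) = f₂ :=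
    (AlgHom.eqOn_adjoin_iff (φ := σ.comp φ) (ψ := AlgHom.id ℂ _)).mpr
      (by simp [hφw, hσw, smul_smul, hq0.ne']) hf₂
  have hinner : σ (d (f₂ * f₁)).1 = f₂ * σ (d f₁).1 := by
    rw [hLeib, hdf₂, zero_mul, zero_add, map_mul, hσφ]
  have houter : (d (f₂ * σ (d f₁).1)).2 = (d f₂).2 * σ (d f₁).1 := by
    rw [hLeib, hdσg₁, mul_zero, add_zero]
  rw [hinner, houter, map_mul, mul_assoc, PolC.map_map_mul_one_sub_Pz_mul_Pw_sq q hσz hg₁,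
    ← PolC.sq_smul_one_sub_Pz_mul_Pw_sq q hq0.ne', mul_smul_comm, smul_mul_assoc, mul_assoc]

/-- for `f₁ = f₁(z) ∈ ℂ[z]` and `f₂ = f₂(z*) ∈ ℂ[z*]` inside `Pol(ℂ)_q`,
`□(f₂·f₁) = (∂⁽ʳ⁾f₂/∂z*) · q⁻²(1 - (1+q⁻²)z*z + q⁻²z*²z²) · (∂⁽ˡ⁾f₁/∂z)`,
where `□f = q² (∂⁽ʳ⁾/∂z*)(∂⁽ʳ⁾f/∂z)(1-zz*)²`.

Setup as in the differential calculus: `d f = (∂⁽ˡ⁾f/∂z, ∂⁽ˡ⁾f/∂z*)`, left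
multiplication on `Ω¹` acts through `φ` (`φ(z)=q⁻²z`, `φ(z*)=q²z*`), and right
partials are `∂⁽ʳ⁾f/∂x = σ(∂⁽ˡ⁾f/∂x)` with `σ(z)=q²z`, `σ(z*)=q⁻²z*`. -/
theorem box_on_wick_products (q : ℝ) (hq0 : 0 < q) (hq1 : q < 1)
    (φ σ : PolC q →ₐ[ℂ] PolC q)
    (hφz : φ (Pz q) = ((q : ℂ) ^ (-2 : ℤ)) • Pz q)
    (hφw : φ (Pw q) = ((q : ℂ) ^ (2 : ℤ)) • Pw q)
    (hσz : σ (Pz q) = ((q : ℂ) ^ (2 : ℤ)) • Pz q)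
    (hσw : σ (Pw q) = ((q : ℂ) ^ (-2 : ℤ)) • Pw q)
    (d : PolC q →ₗ[ℂ] PolC q × PolC q)
    (hdz : d (Pz q) = (1, 0))
    (hdw : d (Pw q) = (0, 1))
    (hLeib : ∀ f g : PolC q,
      d (f * g) = ((d f).1 * g + φ f * (d g).1, (d f).2 * g + φ f * (d g).2)) :
    ∀ p r : Polynomial ℂ,
      let f₁ : PolC q := Polynomial.aeval (Pz q) p
      let f₂ : PolC q := Polynomial.aeval (Pw q) r
      ((q : ℂ) ^ 2) • (σ ((d (σ ((d (f₂ * f₁)).1))).2) * (1 - Pz q * Pw q) ^ 2) =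
        σ ((d f₂).2) *
          (((q : ℂ) ^ (-2 : ℤ)) •
            (1 - ((1 : ℂ) + (q : ℂ) ^ (-2 : ℤ)) • (Pw q * Pz q) +
              ((q : ℂ) ^ (-2 : ℤ)) • (Pw q ^ 2 * Pz q ^ 2))) *
          (d f₁).1 :=
  box_on_wick_products_general q hq0 φ σ hφz hφw hσz hσw d hdz hdw hLeib
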